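/- Let A be a complex unital Banach algebra, let e, f, h ∈ A be invertible positive elements, let a ∈ A be such that a^†_{e,h} exists, and suppose a = b c where b x = 0 implies x = 0 and c A = A (so that b^†_{e,f} and c^†_{f,h} exist). Then the following are equivalent: (i) a is weighted EP with weights e and h; (ii) a ∈ c^†_{f,h} A ∩ A b^†_{e,f} (i.e. a = c^†_{f,h} x = y b^†_{e,f} for some x, y ∈ A); (iii) a^†_{e,h} ∈ b A ∩ A c (i.e. a^†_{e,h} = b x = y c for some x, y ∈ A). -/

import Mathlib

/-!
For `a = b c` with `b† b = 1` and `c c† = 1`, every `z` with `a z a = a` satisfies `c z b = 1`.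
Hence `a z` and `b b†` are idempotents with the same range, and `z a` and `c† c` are idempotents
with the same kernel; in both cases the difference squares to zero. For `z = a†` both members of
each pair are hermitian for the same weight, and such idempotents coincide. Positive square roots
are unique (Liouville's theorem applied to `s d = d (-t)`, where `σ(s) ∩ σ(-t) = ∅`), so
conjugating by the square root of the weight reduces this to hermitian idempotents `P`, `Q`:
`exp(iπ P) = 1 - 2P` has norm one, `(1 - 2Q)(1 - 2P) = 1 + m` with `m² = 0`, and
`‖1 + k m‖ = ‖(1 + m)^k‖ ≤ 1` for all `k` forces `m = 0`. So `a a† = b b†` and `a† a = c† c`,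
and each of the three conditions is equivalent to `b b† = c† c`.
-/

noncomputable section

def IsHermitianEl {A : Type*} [NormedRing A] [NormedAlgebra ℂ A] (a : A) : Prop :=
  ∀ t : ℝ, ‖NormedSpace.exp ((Complex.I * (t : ℂ)) • a)‖ = 1

def IsPositiveEl {A : Type*} [NormedRing A] [NormedAlgebra ℂ A] (a : A) : Prop :=
  IsHermitianEl a ∧ spectrum ℂ a ⊆ Complex.ofReal '' Set.Ici (0 : ℝ)

/-- `a` is hermitian in `A^u`, i.e. hermitian for the equivalent norm
`‖x‖_u = ‖u^{1/2} x u^{-1/2}‖`, where `u^{1/2}` is the (unique) invertible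
positive square root of the invertible positive weight `u`. -/
def IsHermitianWt {A : Type*} [NormedRing A] [NormedAlgebra ℂ A] (u a : A) : Prop :=
  ∃ s : Aˣ, IsPositiveEl (s : A) ∧ ((s : A)) ^ 2 = u ∧
    ∀ t : ℝ, ‖(s : A) * NormedSpace.exp ((Complex.I * (t : ℂ)) • a) * ((s⁻¹ : Aˣ) : A)‖ = 1

/-- `b` is the weighted Moore–Penrose inverse of `a` with weights `e` and `f`. -/
def IsWMPI {A : Type*} [NormedRing A] [NormedAlgebra ℂ A] (e f a b : A) : Prop :=
  a * b * a = a ∧ b * a * b = b ∧ IsHermitianWt e (a * b) ∧ IsHermitianWt f (b * a)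

/-- `a` is weighted EP with weights `e` and `f`. -/
def IsWEP {A : Type*} [NormedRing A] [NormedAlgebra ℂ A] (e f a : A) : Prop :=
  ∃ b : A, IsWMPI e f a b ∧ a * b = b * a

/-- `S ∈ L(Y,X)` is the weighted Moore–Penrose inverse of `T ∈ L(X,Y)` with
weights `E ∈ L(Y)` and `F ∈ L(X)`. -/
def IsWMPIop {X Y : Type*} [NormedAddCommGroup X] [NormedSpace ℂ X]
    [NormedAddCommGroup Y] [NormedSpace ℂ Y]
    (E : Y →L[ℂ] Y) (F : X →L[ℂ] X) (T : X →L[ℂ] Y) (S : Y →L[ℂ] X) : Prop :=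
  (T.comp S).comp T = T ∧ (S.comp T).comp S = S ∧
    IsHermitianWt E (T.comp S) ∧ IsHermitianWt F (S.comp T)

/-- `T ∈ L(X)` is weighted EP with weights `E` and `F`. -/
def IsWEPop {X : Type*} [NormedAddCommGroup X] [NormedSpace ℂ X]
    (E F T : X →L[ℂ] X) : Prop :=
  ∃ S : X →L[ℂ] X, IsWMPIop E F T S ∧ T.comp S = S.comp T

theorem eq_zero_of_mul_self_eq_zero_of_norm_one_add_le_one {A : Type*} [NormedRing A]
    [NormedSpace ℝ A] {m : A} (hm : m * m = 0) (h : ‖1 + m‖ ≤ 1) : m = 0 := by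
  have hpow : ∀ k : ℕ, (1 + m) ^ (k + 1) = 1 + (k + 1) • m := by
    intro k
    induction k with
    | zero => simp
    | succ k ih =>
      rw [pow_succ, ih, add_mul, one_mul, mul_add, mul_one, smul_mul_assoc, hm, smul_zero,
        add_zero, add_assoc, ← succ_nsmul']
  have hbound : ∀ k : ℕ, (k + 1) * ‖m‖ ≤ 1 + ‖(1 : A)‖ := fun k => calc
    (k + 1) * ‖m‖ = ‖(1 + m) ^ (k + 1) - 1‖ := by
      rw [hpow, add_sub_cancel_left, RCLike.norm_nsmul ℝ, nsmul_eq_mul]; push_cast; ring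
    _ ≤ ‖1 + m‖ ^ (k + 1) + ‖(1 : A)‖ := by
      grw [norm_sub_le, norm_pow_le' _ k.succ_pos]
    _ ≤ 1 + ‖(1 : A)‖ := by gcongr; exact pow_le_one₀ (norm_nonneg _) h
  by_contra hm0
  obtain ⟨k, hk⟩ := exists_nat_gt ((1 + ‖(1 : A)‖) / ‖m‖)
  have := hbound k
  rw [div_lt_iff₀ (norm_pos_iff.2 hm0)] at hk
  nlinarith [norm_nonneg m]

theorem resolvent_mul_eq_mul_resolvent {R A : Type*} [CommRing R] [Ring A] [Algebra R A]
    {a b d : A} (h : a * d = d * b) {z : R} (hza : z ∈ resolventSet R a)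
    (hzb : z ∈ resolventSet R b) : resolvent a z * d = d * resolvent b z := by
  have hsemi : SemiconjBy d hzb.unit hza.unit := by
    change d * (algebraMap R A z - b) = (algebraMap R A z - a) * d
    rw [mul_sub, sub_mul, h, Algebra.commutes]
  rw [spectrum.resolvent_eq hza, spectrum.resolvent_eq hzb]
  exact hsemi.units_inv_right.symm

section

variable {A : Type*} [NormedRing A] [NormedAlgebra ℂ A]

theorem IsIdempotentElem.exp_smul {p : A} (hp : IsIdempotentElem p) (z : ℂ) :
    NormedSpace.exp (z • p) = 1 + (Complex.exp z - 1) • p := by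
  have hsum : HasSum (fun n : ℕ => (n.factorial⁻¹ : ℂ) • (z • p) ^ n)
      (Complex.exp z • p + (1 - p)) := by
    have hexp := (NormedSpace.exp_series_hasSum_exp' (𝕂 := ℂ) z).smul_const p
    rw [← Complex.exp_eq_exp_ℂ] at hexp
    convert hexp.add (hasSum_ite_eq 0 (1 - p)) using 1
    funext n
    rcases n with _ | n
    · simp
    · rw [smul_pow, hp.pow_succ_eq, smul_smul, smul_eq_mul]
      simp
  rw [NormedSpace.exp_eq_tsum ℂ]
  dsimp only
  rw [hsum.tsum_eq, sub_smul, one_smul]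
  abel

theorem IsHermitianEl.norm_one_sub_two_mul {p : A} (hp : IsHermitianEl p)
    (hp' : IsIdempotentElem p) : ‖1 - 2 * p‖ = 1 := by
  rw [← hp Real.pi, hp'.exp_smul, mul_comm, Complex.exp_pi_mul_I, Algebra.smul_def]
  simp only [map_sub, map_neg, map_one]
  noncomm_ring

theorem IsHermitianEl.eq_of_isIdempotentElem {p q : A} (hp : IsHermitianEl p)
    (hq : IsHermitianEl q) (hp' : IsIdempotentElem p) (hq' : IsIdempotentElem q)
    (hpq : (p - q) * (p - q) = 0) : p = q := by
  set V := 1 - 2 * q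
  set n := p - q
  have hV : V * V = 1 := by
    have : V * V = 1 + 4 * (q * q - q) := by simp only [V]; noncomm_ring
    rw [this, hq'.eq, sub_self, mul_zero, add_zero]
  have hanti : n * V = -(V * n) := by
    refine eq_neg_of_add_eq_zero_right ?_
    have : V * n + n * V = 2 * (n * n) - 2 * (p * p - p) + 2 * (q * q - q) := by
      simp only [V, n]; noncomm_ring
    rw [this, hpq, hp'.eq, hq'.eq]
    simp
  have hVn : -2 * (V * n) = 0 := by
    apply eq_zero_of_mul_self_eq_zero_of_norm_one_add_le_one
    · calc -2 * (V * n) * (-2 * (V * n)) = 4 * (V * (n * V) * n) := by noncomm_ring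
        _ = 0 := by
          rw [hanti, mul_neg, neg_mul, ← mul_assoc, hV, one_mul, hpq, neg_zero, mul_zero]
    · have hVU : V * (1 - 2 * p) = 1 + -2 * (V * n) := by
        rw [show 1 - 2 * p = V - 2 * n by simp only [V, n]; noncomm_ring, mul_sub, hV]
        noncomm_ring
      calc ‖1 + -2 * (V * n)‖ ≤ ‖V‖ * ‖1 - 2 * p‖ := hVU ▸ norm_mul_le _ _
        _ = 1 := by rw [hq.norm_one_sub_two_mul hq', hp.norm_one_sub_two_mul hp', one_mul]
  have hVn0 : V * n = 0 := by
    have h2 : (-2 : ℂ) • (V * n) = 0 := by rwa [Algebra.smul_def, map_neg, map_ofNat]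
    exact (smul_eq_zero.1 h2).resolve_left (by norm_num)
  rw [← sub_eq_zero, ← one_mul (p - q), ← hV, mul_assoc, hVn0, mul_zero]

open Filter Topology in
theorem eq_zero_of_mul_eq_mul_of_disjoint_spectrum [CompleteSpace A] {a b d : A}
    (h : a * d = d * b) (hab : Disjoint (spectrum ℂ a) (spectrum ℂ b)) : d = 0 := by
  classical
  -- `G` glues `z ↦ R_a(z) d` and `z ↦ d R_b(z)`, which agree on `ρ(a) ∩ ρ(b)`; it is entire and
  -- vanishes at infinity.
  let G : ℂ → A := fun z => if z ∈ spectrum ℂ a then d * resolvent b z else resolvent a z * d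
  have hGa : ∀ z ∈ resolventSet ℂ a, G z = resolvent a z * d :=
    fun z hz => if_neg (not_not.2 hz : z ∉ spectrum ℂ a)
  have hGb : ∀ z ∈ resolventSet ℂ b, G z = d * resolvent b z := by
    intro z hzb
    by_cases hza : z ∈ spectrum ℂ a
    · exact if_pos hza
    · exact (hGa z (not_not.1 hza)).trans (resolvent_mul_eq_mul_resolvent h (not_not.1 hza) hzb)
  have hdiff : Differentiable ℂ G := by
    intro z
    by_cases hza : z ∈ spectrum ℂ a
    · have hzb : z ∈ resolventSet ℂ b := not_not.1 (hab.notMem_of_mem_left hza)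
      have hG : G =ᶠ[𝓝 z] fun w => d * resolvent b w :=
        Filter.eventually_of_mem ((spectrum.isOpen_resolventSet b).mem_nhds hzb) hGb
      exact ((spectrum.hasDerivAt_resolvent_const_left hzb).differentiableAt.const_mul d)
        |>.congr_of_eventuallyEq hG
    · have hza : z ∈ resolventSet ℂ a := not_not.1 hza
      have hG : G =ᶠ[𝓝 z] fun w => resolvent a w * d :=
        Filter.eventually_of_mem ((spectrum.isOpen_resolventSet a).mem_nhds hza) hGa
      exact ((spectrum.hasDerivAt_resolvent_const_left hza).differentiableAt.mul_const d)
        |>.congr_of_eventuallyEq hG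
  have hρ : ∀ᶠ z in Bornology.cobounded ℂ, z ∈ resolventSet ℂ a :=
    (spectrum.eventually_isUnit_resolvent a).mono fun _ => spectrum.isUnit_resolvent.2
  have hlim : Tendsto G (cocompact ℂ) (𝓝 0) := by
    rw [← Metric.cobounded_eq_cocompact]
    simpa using ((spectrum.resolvent_tendsto_cobounded a).mul_const d).congr'
      (hρ.mono fun z hz => (hGa z hz).symm)
  obtain ⟨z, hz⟩ := hρ.exists
  have hGz := hdiff.apply_eq_of_tendsto_cocompact z hlim
  rw [hGa z hz] at hGz
  exact (spectrum.isUnit_resolvent.1 hz).mul_right_eq_zero.1 hGz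

theorem eq_of_sq_eq_of_spectrum_nonneg [CompleteSpace A] {s t : A} (hs : IsUnit s)
    (hσs : spectrum ℂ s ⊆ Complex.ofReal '' Set.Ici 0)
    (hσt : spectrum ℂ t ⊆ Complex.ofReal '' Set.Ici 0) (h : s ^ 2 = t ^ 2) : s = t := by
  have hdisj : Disjoint (spectrum ℂ s) (spectrum ℂ (-t)) := by
    rw [← spectrum.neg_eq, Set.disjoint_left]
    intro z hzs hzt
    obtain ⟨r, hr, rfl⟩ := hσs hzs
    obtain ⟨r', hr', hr'r⟩ := hσt (Set.mem_neg.1 hzt)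
    have hr0 : r = 0 := by
      have : r' = -r := by exact_mod_cast hr'r
      linarith [Set.mem_Ici.1 hr, Set.mem_Ici.1 hr']
    exact spectrum.zero_notMem ℂ hs (by simpa [hr0] using hzs)
  refine sub_eq_zero.1 (eq_zero_of_mul_eq_mul_of_disjoint_spectrum ?_ hdisj)
  rw [mul_sub, sub_mul, mul_neg, mul_neg, sub_neg_eq_add, ← sq, ← sq, h]
  abel

theorem IsHermitianWt.eq_of_isIdempotentElem [CompleteSpace A] {u p q : A}
    (hp : IsHermitianWt u p) (hq : IsHermitianWt u q) (hp' : IsIdempotentElem p)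
    (hq' : IsIdempotentElem q) (hpq : (p - q) * (p - q) = 0) : p = q := by
  obtain ⟨s, hs, hsu, hsp⟩ := hp
  obtain ⟨s', hs', hs'u, hs'q⟩ := hq
  obtain rfl : s = s' :=
    Units.ext (eq_of_sq_eq_of_spectrum_nonneg s.isUnit hs.2 hs'.2 (hsu.trans hs'u.symm))
  let _ : NormedAlgebra ℚ A := .restrictScalars ℚ ℂ A
  let φ := MulSemiringAction.toRingEquiv (ConjAct Aˣ) A (ConjAct.toConjAct s)
  have hφ : ∀ x, φ x = s * x * ↑s⁻¹ := fun _ => rfl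
  have herm : ∀ r : A, (∀ t : ℝ, ‖↑s * NormedSpace.exp ((Complex.I * t) • r) * ↑s⁻¹‖ = 1) →
      IsHermitianEl (φ r) := by
    intro r hr t
    rw [hφ, ← smul_mul_assoc, ← mul_smul_comm, NormedSpace.exp_units_conj, hr]
  apply φ.injective
  exact (herm p hsp).eq_of_isIdempotentElem (herm q hs'q) (hp'.map φ) (hq'.map φ)
    (by rw [← map_sub, ← map_mul, hpq, map_zero])

end

section

variable {R : Type*} [Ring R] {a b c z ad bd cd : R}

theorem isIdempotentElem_mul_of_mul_mul_eq_self (h : a * z * a = a) :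
    IsIdempotentElem (a * z) := by
  rw [IsIdempotentElem, ← mul_assoc, h]

theorem isIdempotentElem_mul_of_mul_mul_eq_self' (h : a * z * a = a) :
    IsIdempotentElem (z * a) := by
  rw [IsIdempotentElem, mul_assoc, ← mul_assoc a, h]

theorem mul_mul_eq_one_of_eq_mul (habc : a = b * c) (hb : bd * b = 1) (hc : c * cd = 1)
    (hz : a * z * a = a) : c * z * b = 1 := calc
  c * z * b = bd * b * (c * z * b) * (c * cd) := by rw [hb, hc, one_mul, mul_one]
  _ = bd * (a * z * a) * cd := by simp only [habc, mul_assoc]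
  _ = 1 := by rw [hz, habc, ← mul_assoc, hb, one_mul, hc]

theorem exists_eq_mul_and_exists_eq_mul_iff_of_eq_mul (habc : a = b * c) (hb : bd * b = 1)
    (hc : c * cd = 1) : ((∃ x, a = cd * x) ∧ ∃ y, a = y * bd) ↔ b * bd = cd * c := by
  constructor
  · rintro ⟨⟨x, hx⟩, ⟨y, hy⟩⟩
    have hcdc : cd * c * a = a := by rw [hx, ← mul_assoc, mul_assoc cd, hc, mul_one]
    have hbbd : a * (b * bd) = a := by rw [hy, mul_assoc, ← mul_assoc bd, hb, one_mul]
    have hcdcb : cd * c * b = b := calc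
      cd * c * b = cd * c * (b * c) * cd := by simp only [mul_assoc, hc, mul_one]
      _ = b := by rw [← habc, hcdc, habc, mul_assoc, hc, mul_one]
    have hcbbd : c * (b * bd) = c := calc
      c * (b * bd) = bd * (b * c * (b * bd)) := by simp only [← mul_assoc, hb, one_mul]
      _ = c := by rw [← habc, hbbd, habc, ← mul_assoc, hb, one_mul]
    calc b * bd = cd * c * b * bd := by rw [hcdcb]
      _ = cd * c := by simp only [mul_assoc, hcbbd]
  · intro h
    refine ⟨⟨c * a, ?_⟩, ⟨a * b, ?_⟩⟩
    · rw [← mul_assoc, ← h, habc, ← mul_assoc, mul_assoc b, hb, mul_one]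
    · rw [mul_assoc, h, habc, mul_assoc, ← mul_assoc c, hc, one_mul]

theorem exists_eq_mul_and_exists_eq_mul_iff_of_mul_eq (had : ad * a * ad = ad)
    (hp : a * ad = b * bd) (hq : ad * a = cd * c) (hb : bd * b = 1) (hc : c * cd = 1) :
    ((∃ x, ad = b * x) ∧ ∃ y, ad = y * c) ↔ b * bd = cd * c := by
  constructor
  · rintro ⟨⟨x, hx⟩, ⟨y, hy⟩⟩
    have hbbd : b * bd * ad = ad := by rw [hx, ← mul_assoc, mul_assoc b, hb, mul_one]
    have hcdc : ad * (cd * c) = ad := by rw [hy, mul_assoc, ← mul_assoc c, hc, one_mul]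
    calc b * bd = a * (ad * (cd * c)) := by rw [hcdc, hp]
      _ = b * bd * (ad * a) := by rw [hq, ← mul_assoc, hp]
      _ = cd * c := by rw [← mul_assoc, hbbd, hq]
  · intro h
    refine ⟨⟨bd * ad, ?_⟩, ⟨ad * cd, ?_⟩⟩
    · calc ad = ad * a * ad := had.symm
        _ = b * (bd * ad) := by rw [hq, ← h, mul_assoc]
    · calc ad = ad * a * ad := had.symm
        _ = ad * cd * c := by rw [mul_assoc, hp, h, ← mul_assoc]

end

section

variable {A : Type*} [NormedRing A] [NormedAlgebra ℂ A] [CompleteSpace A] {e f h a b c z bd cd : A}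

theorem IsWMPI.mul_inv_eq_of_eq_mul (hz : IsWMPI e h a z) (hbd : IsWMPI e f b bd)
    (habc : a = b * c) (hb : bd * b = 1) (hc : c * cd = 1) : a * z = b * bd := by
  have hczb := mul_mul_eq_one_of_eq_mul habc hb hc hz.1
  have h1 : a * z * (b * bd) = b * bd := calc
    a * z * (b * bd) = b * (c * z * b) * bd := by simp only [habc, mul_assoc]
    _ = b * bd := by rw [hczb, mul_one]
  have h2 : b * bd * (a * z) = a * z := by
    rw [habc, mul_assoc b, ← mul_assoc bd, ← mul_assoc bd, hb, one_mul, mul_assoc]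
  refine hz.2.2.1.eq_of_isIdempotentElem hbd.2.2.1 (isIdempotentElem_mul_of_mul_mul_eq_self hz.1)
    (isIdempotentElem_mul_of_mul_mul_eq_self hbd.1) ?_
  simp only [sub_mul, mul_sub, (isIdempotentElem_mul_of_mul_mul_eq_self hz.1).eq,
    (isIdempotentElem_mul_of_mul_mul_eq_self hbd.1).eq, h1, h2, sub_self]

theorem IsWMPI.inv_mul_eq_of_eq_mul (hz : IsWMPI e h a z) (hcd : IsWMPI f h c cd)
    (habc : a = b * c) (hb : bd * b = 1) (hc : c * cd = 1) : z * a = cd * c := by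
  have hczb := mul_mul_eq_one_of_eq_mul habc hb hc hz.1
  have h1 : z * a * (cd * c) = z * a := by
    rw [habc, mul_assoc z, mul_assoc b, ← mul_assoc c cd, hc, one_mul]
  have h2 : cd * c * (z * a) = cd * c := by
    rw [habc, ← mul_assoc, ← mul_assoc, mul_assoc cd, mul_assoc cd, hczb, mul_one]
  refine hz.2.2.2.eq_of_isIdempotentElem hcd.2.2.2
    (isIdempotentElem_mul_of_mul_mul_eq_self' hz.1)
    (isIdempotentElem_mul_of_mul_mul_eq_self' hcd.1) ?_
  simp only [sub_mul, mul_sub, (isIdempotentElem_mul_of_mul_mul_eq_self' hz.1).eq,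
    (isIdempotentElem_mul_of_mul_mul_eq_self' hcd.1).eq, h1, h2, sub_self]

theorem isWEP_iff_of_eq_mul {ad : A} (had : IsWMPI e h a ad) (hbd : IsWMPI e f b bd)
    (hcd : IsWMPI f h c cd) (habc : a = b * c) (hb : bd * b = 1) (hc : c * cd = 1) :
    IsWEP e h a ↔ b * bd = cd * c := by
  constructor
  · rintro ⟨z, hz, hcomm⟩
    rw [← hz.mul_inv_eq_of_eq_mul hbd habc hb hc, ← hz.inv_mul_eq_of_eq_mul hcd habc hb hc, hcomm]
  · intro hbc
    refine ⟨ad, had, ?_⟩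
    rw [had.mul_inv_eq_of_eq_mul hbd habc hb hc, had.inv_mul_eq_of_eq_mul hcd habc hb hc, hbc]

end

theorem factorization_bc_weighted_EP_iff_membership_general
    {A : Type*} [NormedRing A] [NormedAlgebra ℂ A] [CompleteSpace A]
    (e f h a b c : A)
    (ad : A) (had : IsWMPI e h a ad)
    (habc : a = b * c)
    (hb : ∀ x : A, b * x = 0 → x = 0) (hc : ∀ y : A, ∃ x : A, c * x = y)
    (bd : A) (hbd : IsWMPI e f b bd) (cd : A) (hcd : IsWMPI f h c cd) :
    (IsWEP e h a ↔ ((∃ x : A, a = cd * x) ∧ (∃ y : A, a = y * bd))) ∧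
    (IsWEP e h a ↔ ((∃ x : A, ad = b * x) ∧ (∃ y : A, ad = y * c))) := by
  have hbdb : bd * b = 1 :=
    sub_eq_zero.1 <| hb _ <| by rw [mul_sub, ← mul_assoc, hbd.1, mul_one, sub_self]
  have hccd : c * cd = 1 := by
    obtain ⟨x, hx⟩ := hc 1
    calc c * cd = c * cd * (c * x) := by rw [hx, mul_one]
      _ = 1 := by rw [← mul_assoc, hcd.1, hx]
  rw [isWEP_iff_of_eq_mul had hbd hcd habc hbdb hccd,
    exists_eq_mul_and_exists_eq_mul_iff_of_eq_mul habc hbdb hccd,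
    exists_eq_mul_and_exists_eq_mul_iff_of_mul_eq had.2.1
      (had.mul_inv_eq_of_eq_mul hbd habc hbdb hccd) (had.inv_mul_eq_of_eq_mul hcd habc hbdb hccd)
      hbdb hccd]
  exact ⟨.rfl, .rfl⟩

/-- For `a = b c` as above, `a` is weighted EP with weights `e` and `h` iff
`a ∈ c^†_{f,h} A ∩ A b^†_{e,f}`, iff `a^†_{e,h} ∈ b A ∩ A c`. -/
theorem factorization_bc_weighted_EP_iff_membership
    {A : Type*} [NormedRing A] [NormedAlgebra ℂ A] [CompleteSpace A]
    (e f h a b c : A)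
    (he : IsPositiveEl e ∧ IsUnit e) (hf : IsPositiveEl f ∧ IsUnit f)
    (hh : IsPositiveEl h ∧ IsUnit h)
    (ad : A) (had : IsWMPI e h a ad)
    (habc : a = b * c)
    (hb : ∀ x : A, b * x = 0 → x = 0) (hc : ∀ y : A, ∃ x : A, c * x = y)
    (bd : A) (hbd : IsWMPI e f b bd) (cd : A) (hcd : IsWMPI f h c cd) :
    (IsWEP e h a ↔ ((∃ x : A, a = cd * x) ∧ (∃ y : A, a = y * bd))) ∧
    (IsWEP e h a ↔ ((∃ x : A, ad = b * x) ∧ (∃ y : A, ad = y * c))) :=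
  factorization_bc_weighted_EP_iff_membership_general e f h a b c ad had habc hb hc bd hbd cd hcd
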